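/- Let f : C → C be a geodesic-preserving bijection of the flat cylinder C such that f(π(0,0)) = π(0,0), f(π(0,1)) = π(0,1), and f maps the vertical geodesic v = π({0} × ℝ) onto itself. Then f fixes every point of v of dyadic rational height: for all n ∈ ℤ and m ∈ ℕ, f(π(0, n / 2^m)) = π(0, n / 2^m). -/

import Mathlib

/-!
An axis-preserving collineation `f` acts on the axis `v` through a bijection `g = heightMap f`
of heights. The non-vertical geodesics are the spirals `{(x, s x + y)}`; the trace of such a
spiral on `v` is the progression `y + sℤ`, so `g` maps progressions onto progressions. The trace is a single
point exactly for horizontal circles, so these are permuted and `f` acts on all heights by `g`.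

Comparing the traces of `spiral 0 j` and `spiral 0 1` shows that `f` sends `spiral 0 1` to
`spiral 0 (±1)`; composing with the reflection `x ↦ -x` we may assume it is fixed. The spirals
through a point of `v` with slopes `e` and `2e` cross only on `v`, and this rigidity propagates
invariance to all slopes `±2ᵇ` through every fixed dyadic height. Two invariant spirals through
heights `y₀, y₁` with slopes `2ᵇ⁺¹, 2ᵇ` (resp. `2ᵇ, -2ᵇ`) cross at heights
`2y₁ - y₀ + 2ᵇ⁺¹ℤ` (resp. `(y₀ + y₁)/2 + 2ᵇ⁻¹ℤ`), and `f` permutes these crossings; letting `b`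
grow, `g` fixes `2y₁ - y₀` and `(y₀ + y₁)/2`, which generate all dyadic rationals from `0, 1`.
-/

/-- The flat cylinder `C = (ℝ/ℤ) × ℝ`. -/
abbrev Cyl : Type := AddCircle (1 : ℝ) × ℝ

/-- The quotient map `π : ℝ × ℝ → C`, `π(x, y) = (↑x, y)`. -/
noncomputable def cylπ (p : ℝ × ℝ) : Cyl := ((p.1 : AddCircle (1 : ℝ)), p.2)

/-- An affine line in `ℝ²`. -/
def IsLine (L : Set (ℝ × ℝ)) : Prop :=
  ∃ p v : ℝ × ℝ, v ≠ 0 ∧ L = {x | ∃ t : ℝ, x = p + t • v}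

/-- A geodesic of the flat cylinder is the image under `π` of an affine line. -/
def IsCylGeodesic (G : Set Cyl) : Prop :=
  ∃ L : Set (ℝ × ℝ), IsLine L ∧ G = cylπ '' L

namespace FlatCylinder

open Set

lemma coe_eq_zero_iff_exists_int {x : ℝ} : (x : AddCircle (1 : ℝ)) = 0 ↔ ∃ k : ℤ, x = k := by
  rw [AddCircle.coe_eq_zero_iff]
  exact exists_congr fun k ↦ by simp [eq_comm]

lemma coe_eq_coe_iff_exists_int {x y : ℝ} :
    (x : AddCircle (1 : ℝ)) = y ↔ ∃ k : ℤ, y = x + k := by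
  rw [← sub_eq_zero, ← AddCircle.coe_sub, coe_eq_zero_iff_exists_int]
  constructor
  · rintro ⟨k, hk⟩
    exact ⟨-k, by push_cast; linarith⟩
  · rintro ⟨k, hk⟩
    exact ⟨-k, by push_cast; linarith⟩

def arithProg (y s : ℝ) : Set ℝ := {r | ∃ k : ℤ, r = y + s * k}

lemma self_mem_arithProg (y s : ℝ) : y ∈ arithProg y s := ⟨0, by simp⟩

lemma add_mem_arithProg (y s : ℝ) : y + s ∈ arithProg y s := ⟨1, by simp⟩

lemma arithProg_subset_iff {y a b : ℝ} :
    arithProg y a ⊆ arithProg y b ↔ ∃ t : ℤ, a = b * t := by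
  refine ⟨fun h ↦ ?_, ?_⟩
  · obtain ⟨t, ht⟩ := h (add_mem_arithProg y a)
    exact ⟨t, by linarith⟩
  · rintro ⟨t, rfl⟩ r ⟨k, rfl⟩
    exact ⟨t * k, by push_cast; ring⟩

lemma arithProg_neg (y s : ℝ) : arithProg y (-s) = arithProg y s :=
  Subset.antisymm (arithProg_subset_iff.2 ⟨-1, by push_cast; ring⟩)
    (arithProg_subset_iff.2 ⟨-1, by push_cast; ring⟩)

lemma arithProg_eq_iff {y a b : ℝ} : arithProg y a = arithProg y b ↔ a = b ∨ a = -b := by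
  refine ⟨fun h ↦ ?_, ?_⟩
  · obtain ⟨t, hab⟩ := arithProg_subset_iff.1 h.subset
    obtain ⟨t', hba⟩ := arithProg_subset_iff.1 h.symm.subset
    rcases eq_or_ne b 0 with rfl | hb
    · exact Or.inl (by simpa using hab)
    have htt' : t * t' = 1 := by
      have : b * (t * t' : ℤ) = b * 1 := by push_cast; rw [← mul_assoc, ← hab, ← hba, mul_one]
      exact_mod_cast mul_left_cancel₀ hb this
    rcases Int.eq_one_or_neg_one_of_mul_eq_one htt' with rfl | rfl <;> simp [hab]
  · rintro (rfl | rfl)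
    exacts [rfl, arithProg_neg y b]

lemma arithProg_subsingleton_iff {y s : ℝ} : (arithProg y s).Subsingleton ↔ s = 0 := by
  refine ⟨fun h ↦ ?_, ?_⟩
  · simpa using h (add_mem_arithProg y s) (self_mem_arithProg y s)
  · rintro rfl r ⟨_, rfl⟩ r' ⟨_, rfl⟩
    simp

def spiral (y s : ℝ) : Set Cyl := {q | ∃ x : ℝ, q = ((x : AddCircle (1 : ℝ)), s * x + y)}

def axis : Set Cyl := {q | q.1 = 0}

lemma isCylGeodesic_spiral (y s : ℝ) : IsCylGeodesic (spiral y s) := by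
  refine ⟨_, ⟨(0, y), (1, s), by simp, rfl⟩, ?_⟩
  ext q
  constructor
  · rintro ⟨x, rfl⟩
    exact ⟨(x, s * x + y), ⟨x, by ext <;> simp; ring⟩, rfl⟩
  · rintro ⟨_, ⟨t, rfl⟩, rfl⟩
    exact ⟨t, by simp [cylπ]; ring⟩

lemma mk_zero_mem_spiral_iff {r y s : ℝ} :
    ((0 : AddCircle (1 : ℝ)), r) ∈ spiral y s ↔ r ∈ arithProg y s := by
  constructor
  · rintro ⟨x, hx⟩
    simp only [Prod.mk.injEq] at hx
    obtain ⟨k, hk⟩ := coe_eq_zero_iff_exists_int.1 hx.1.symm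
    exact ⟨k, by rw [hx.2, hk]; ring⟩
  · rintro ⟨k, rfl⟩
    exact ⟨k, Prod.ext (coe_eq_zero_iff_exists_int.2 ⟨k, rfl⟩).symm (by ring)⟩

lemma spiral_eq_of_mem_arithProg {y y' s : ℝ} (h : y' ∈ arithProg y s) :
    spiral y' s = spiral y s := by
  obtain ⟨k, rfl⟩ := h
  ext q
  constructor
  · rintro ⟨x, rfl⟩
    refine ⟨x + k, ?_⟩
    simp only [Prod.mk.injEq, coe_eq_coe_iff_exists_int]
    exact ⟨⟨k, rfl⟩, by ring⟩
  · rintro ⟨x, rfl⟩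
    refine ⟨x - k, ?_⟩
    simp only [Prod.mk.injEq, coe_eq_coe_iff_exists_int]
    exact ⟨⟨-k, by push_cast; ring⟩, by ring⟩

lemma mk_mem_axis_iff {x r : ℝ} : (((x : AddCircle (1 : ℝ)), r) : Cyl) ∈ axis ↔ ∃ k : ℤ, x = k :=
  coe_eq_zero_iff_exists_int

lemma spiral_not_subset_axis (y s : ℝ) : ¬ spiral y s ⊆ axis := by
  intro h
  obtain ⟨k, hk⟩ := mk_mem_axis_iff.1 (h ⟨1 / 2, rfl⟩)
  have : (2 * k : ℤ) = 1 := by exact_mod_cast (by linarith : (2 * k : ℝ) = 1)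
  omega

lemma spiral_injective (y : ℝ) : Function.Injective (spiral y) := by
  intro a b h
  have htrace : arithProg y a = arithProg y b := by
    ext r; rw [← mk_zero_mem_spiral_iff, ← mk_zero_mem_spiral_iff, h]
  rcases arithProg_eq_iff.1 htrace with hab | rfl
  · exact hab
  -- the point over `1/4` on `spiral y (-b)` lies over `-1/4` on `spiral y b`
  obtain ⟨x, hx⟩ : ((((1 / 4 : ℝ) : AddCircle (1 : ℝ)), -b * (1 / 4) + y) : Cyl) ∈ spiral y b :=
    h ▸ ⟨1 / 4, rfl⟩
  simp only [Prod.mk.injEq, coe_eq_coe_iff_exists_int] at hx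
  obtain ⟨⟨k, hk⟩, hb⟩ := hx
  rw [hk] at hb
  have : b * (2 * k + 1) = 0 := by linarith
  rcases mul_eq_zero.1 this with hb0 | hk
  · simp [hb0]
  · have : (2 * k + 1 : ℤ) = 0 := by exact_mod_cast hk
    omega

lemma spiral_inter_spiral_mul_subset_axis_iff {y a : ℝ} (ha : a ≠ 0) (t : ℤ) :
    spiral y a ∩ spiral y (a * t) ⊆ axis ↔ t = 0 ∨ t = 2 := by
  constructor
  · intro h
    by_cases ht1 : t = 1
    · subst ht1
      exact absurd (by simpa using h) (spiral_not_subset_axis y a)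
    have ht1' : (t : ℝ) - 1 ≠ 0 := sub_ne_zero.2 (by exact_mod_cast ht1)
    -- the crossing over `t / (t - 1)` of the two spirals must lie on the axis
    have hmem : ((((t / (t - 1) : ℝ) : AddCircle (1 : ℝ)), a * (t / (t - 1)) + y) : Cyl) ∈
        spiral y a ∩ spiral y (a * t) := by
      refine ⟨⟨_, rfl⟩, t / (t - 1) - 1, ?_⟩
      simp only [Prod.mk.injEq, coe_eq_coe_iff_exists_int]
      exact ⟨⟨-1, by push_cast; ring⟩, by field_simp; ring⟩
    obtain ⟨k, hk⟩ := mk_mem_axis_iff.1 (h hmem)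
    have : ((t - 1) * (k - 1) : ℤ) = 1 := by
      have : (t : ℝ) = k * (t - 1) := by rw [← hk]; field_simp
      exact_mod_cast (by linarith : ((t - 1) * (k - 1) : ℝ) = 1)
    rcases Int.eq_one_or_neg_one_of_mul_eq_one this with h | h <;> omega
  · rintro ht q ⟨⟨x, rfl⟩, ⟨x', hx'⟩⟩
    simp only [Prod.mk.injEq, coe_eq_coe_iff_exists_int] at hx'
    obtain ⟨⟨k, rfl⟩, hx⟩ := hx'
    have hx : x * (1 - t) = t * k := by
      have := mul_left_cancel₀ ha (by linarith : a * x = a * (t * (x + k)))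
      linarith
    refine mk_mem_axis_iff.2 ?_
    rcases ht with rfl | rfl
    · exact ⟨0, by simpa using hx⟩
    · exact ⟨-2 * k, by push_cast at hx ⊢; linarith⟩

lemma exists_int_of_mem_spiral_inter_spiral {y₀ y₁ s t : ℝ} {q : Cyl}
    (hq : q ∈ spiral y₀ s ∩ spiral y₁ t) :
    ∃ k : ℤ, (s - t) * q.2 = s * y₁ - t * y₀ + s * t * k := by
  obtain ⟨⟨x, rfl⟩, ⟨x', hx'⟩⟩ := hq
  simp only [Prod.mk.injEq, coe_eq_coe_iff_exists_int] at hx'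
  obtain ⟨⟨k, rfl⟩, hx⟩ := hx'
  exact ⟨k, by linear_combination s * hx⟩

lemma exists_mem_spiral_inter_spiral {y₀ y₁ s t z : ℝ} (hst : s ≠ t)
    (hz : (s - t) * z = s * y₁ - t * y₀) : ∃ q ∈ spiral y₀ s ∩ spiral y₁ t, q.2 = z := by
  obtain ⟨x, hx⟩ : ∃ x, (s - t) * x = y₁ - y₀ :=
    ⟨(y₁ - y₀) / (s - t), mul_div_cancel₀ _ (sub_ne_zero.2 hst)⟩
  have hz' : z = s * x + y₀ :=
    mul_left_cancel₀ (sub_ne_zero.2 hst) (by linear_combination hz - s * hx)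
  exact ⟨_, ⟨⟨x, rfl⟩, ⟨x, Prod.ext rfl (by linear_combination hx)⟩⟩, hz'.symm⟩

lemma isCylGeodesic_cases {G : Set Cyl} (hG : IsCylGeodesic G) :
    (∃ θ, G = {q : Cyl | q.1 = θ}) ∨ ∃ y s, G = spiral y s := by
  obtain ⟨_, ⟨p, w, hw, rfl⟩, rfl⟩ := hG
  by_cases hw₁ : w.1 = 0
  · have hw₂ : w.2 ≠ 0 := fun h ↦ hw (Prod.ext hw₁ h)
    refine Or.inl ⟨(p.1 : AddCircle (1 : ℝ)), ?_⟩
    ext q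
    constructor
    · rintro ⟨_, ⟨t, rfl⟩, rfl⟩
      simp [cylπ, hw₁]
    · intro hq
      refine ⟨(p.1, q.2), ⟨(q.2 - p.2) / w.2, ?_⟩, Prod.ext hq.symm rfl⟩
      ext <;> simp [hw₁, hw₂]
  · refine Or.inr ⟨p.2 - w.2 / w.1 * p.1, w.2 / w.1, ?_⟩
    ext q
    constructor
    · rintro ⟨_, ⟨t, rfl⟩, rfl⟩
      exact ⟨p.1 + t * w.1, by ext <;> simp [cylπ]; field_simp; ring⟩
    · rintro ⟨x, rfl⟩
      refine ⟨(x, w.2 / w.1 * x + (p.2 - w.2 / w.1 * p.1)), ⟨(x - p.1) / w.1, ?_⟩, rfl⟩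
      ext <;> simp <;> field_simp <;> ring

def reflect (q : Cyl) : Cyl := (-q.1, q.2)

lemma reflect_involutive : Function.Involutive reflect := fun q ↦ by simp [reflect]

lemma reflect_cylπ (p : ℝ × ℝ) : reflect (cylπ p) = cylπ (-p.1, p.2) := by
  simp [reflect, cylπ]

lemma isCylGeodesic_image_reflect {G : Set Cyl} (hG : IsCylGeodesic G) :
    IsCylGeodesic (reflect '' G) := by
  obtain ⟨_, ⟨p, v, hv, rfl⟩, rfl⟩ := hG
  refine ⟨_, ⟨(-p.1, p.2), (-v.1, v.2), fun h ↦ hv ?_, rfl⟩, ?_⟩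
  · simpa [Prod.ext_iff] using h
  rw [image_image]
  ext q
  constructor
  · rintro ⟨_, ⟨t, rfl⟩, rfl⟩
    exact ⟨_, ⟨t, rfl⟩, by dsimp only; rw [reflect_cylπ]; congr 1; ext <;> simp; ring⟩
  · rintro ⟨_, ⟨t, rfl⟩, rfl⟩
    exact ⟨_, ⟨t, rfl⟩, by dsimp only; rw [reflect_cylπ]; congr 1; ext <;> simp; ring⟩

lemma image_reflect_spiral (y s : ℝ) : reflect '' spiral y s = spiral y (-s) := by
  ext q
  constructor
  · rintro ⟨_, ⟨x, rfl⟩, rfl⟩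
    exact ⟨-x, by simp [reflect]⟩
  · rintro ⟨x, rfl⟩
    exact ⟨_, ⟨-x, rfl⟩, by simp [reflect]⟩

lemma image_reflect_axis : reflect '' axis = axis := by
  ext q
  constructor
  · rintro ⟨q, hq, rfl⟩
    simpa [reflect, axis] using hq
  · intro hq
    exact ⟨reflect q, by simpa [reflect, axis] using hq, reflect_involutive q⟩

lemma eq_zero_of_forall_exists_eq_two_pow_mul {x c : ℝ}
    (h : ∀ b : ℕ, ∃ k : ℤ, x = 2 ^ b * c * k) : x = 0 := by
  by_contra hx
  obtain ⟨b, hb⟩ := pow_unbounded_of_one_lt (|x| / |c|) one_lt_two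
  obtain ⟨k, rfl⟩ := h b
  have hk : (1 : ℝ) ≤ |(k : ℝ)| := by
    have : k ≠ 0 := by rintro rfl; simp at hx
    exact_mod_cast Int.one_le_abs this
  have hc : 0 < |c| := abs_pos.2 (by rintro rfl; simp at hx)
  rw [div_lt_iff₀ hc, abs_mul, abs_mul, abs_of_pos (by positivity : (0 : ℝ) < 2 ^ b)] at hb
  nlinarith [mul_le_mul_of_nonneg_left hk (by positivity : (0 : ℝ) ≤ 2 ^ b * |c|)]

def IsDyadic (y : ℝ) : Prop := ∃ (m : ℕ) (n : ℤ), y = n / 2 ^ m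

lemma isDyadic_intCast (n : ℤ) : IsDyadic n := ⟨0, n, by simp⟩

structure IsAxialCollineation (f : Cyl → Cyl) : Prop where
  bijective : Function.Bijective f
  isCylGeodesic_image : ∀ G, IsCylGeodesic G → IsCylGeodesic (f '' G)
  image_axis : f '' axis = axis

def heightMap (f : Cyl → Cyl) (r : ℝ) : ℝ := (f ((0 : AddCircle (1 : ℝ)), r)).2

namespace IsAxialCollineation

variable {f : Cyl → Cyl} (hf : IsAxialCollineation f)
include hf

lemma reflect_comp : IsAxialCollineation (reflect ∘ f) where
  bijective := reflect_involutive.bijective.comp hf.bijective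
  isCylGeodesic_image G hG := by
    rw [image_comp]; exact isCylGeodesic_image_reflect (hf.isCylGeodesic_image G hG)
  image_axis := by rw [image_comp, hf.image_axis, image_reflect_axis]

lemma apply_mk_zero (r : ℝ) : f ((0 : AddCircle (1 : ℝ)), r) = (0, heightMap f r) := by
  have : f (0, r) ∈ axis := hf.image_axis ▸ mem_image_of_mem f rfl
  exact Prod.ext this rfl

lemma heightMap_injective : Function.Injective (heightMap f) := fun a b h ↦ by
  simpa using hf.bijective.injective (by rw [hf.apply_mk_zero, hf.apply_mk_zero, h] :
    f ((0 : AddCircle (1 : ℝ)), a) = f (0, b))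

lemma image_inter_axis (S : Set Cyl) : f '' (S ∩ axis) = f '' S ∩ axis := by
  rw [image_inter hf.bijective.injective, hf.image_axis]

lemma image_arithProg {y s y' σ : ℝ} (h : f '' spiral y s = spiral y' σ) :
    heightMap f '' arithProg y s = arithProg y' σ := by
  ext r
  have key := Set.ext_iff.1 (hf.image_inter_axis (spiral y s))
  rw [h] at key
  rw [← mk_zero_mem_spiral_iff]
  constructor
  · rintro ⟨r', hr', rfl⟩
    rw [← hf.apply_mk_zero]
    exact ((key _).1 ⟨_, ⟨mk_zero_mem_spiral_iff.2 hr', rfl⟩, rfl⟩).1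
  · intro hr
    obtain ⟨q, ⟨hqS, hq⟩, hfq⟩ := (key _).2 ⟨hr, rfl⟩
    obtain ⟨r', rfl⟩ : ∃ r', q = ((0 : AddCircle (1 : ℝ)), r') := ⟨q.2, Prod.ext hq rfl⟩
    refine ⟨r', mk_zero_mem_spiral_iff.1 hqS, ?_⟩
    rw [hf.apply_mk_zero] at hfq
    exact congrArg Prod.snd hfq

lemma slope_eq_zero_iff {y s y' σ : ℝ} (h : f '' spiral y s = spiral y' σ) : σ = 0 ↔ s = 0 := by
  rw [← arithProg_subsingleton_iff (y := y') (s := σ),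
    ← arithProg_subsingleton_iff (y := y) (s := s), ← hf.image_arithProg h,
    hf.heightMap_injective.subsingleton_image_iff]

lemma exists_image_spiral (y s : ℝ) : ∃ σ, f '' spiral y s = spiral (heightMap f y) σ := by
  have hy : f (0, y) ∈ f '' spiral y s :=
    mem_image_of_mem f (mk_zero_mem_spiral_iff.2 (self_mem_arithProg y s))
  rcases isCylGeodesic_cases (hf.isCylGeodesic_image _ (isCylGeodesic_spiral y s)) with
    ⟨θ, hθ⟩ | ⟨c, σ, hσ⟩
  · refine absurd ?_ (spiral_not_subset_axis y s)
    have hθ0 : θ = 0 := by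
      have := hθ ▸ hy
      rw [hf.apply_mk_zero] at this
      exact this.symm
    have : f '' spiral y s = f '' axis := by rw [hθ, hθ0, hf.image_axis]; rfl
    exact (image_injective.2 hf.bijective.injective this).le
  · refine ⟨σ, ?_⟩
    rw [hσ, hf.apply_mk_zero, mk_zero_mem_spiral_iff] at hy
    rw [hσ, spiral_eq_of_mem_arithProg hy]

lemma snd_apply (q : Cyl) : (f q).2 = heightMap f q.2 := by
  obtain ⟨σ, hσ⟩ := hf.exists_image_spiral q.2 0
  obtain rfl := (hf.slope_eq_zero_iff hσ).2 rfl
  obtain ⟨x, hx⟩ := QuotientAddGroup.mk_surjective q.1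
  obtain ⟨_, hfq⟩ : f q ∈ spiral (heightMap f q.2) 0 :=
    hσ ▸ mem_image_of_mem f ⟨x, Prod.ext hx.symm (by simp)⟩
  simp [hfq]

lemma image_spiral_neg {y s σ : ℝ} (h : f '' spiral y s = spiral (heightMap f y) σ) :
    f '' spiral y (-s) = spiral (heightMap f y) (-σ) := by
  obtain ⟨τ, hτ⟩ := hf.exists_image_spiral y (-s)
  have : arithProg (heightMap f y) τ = arithProg (heightMap f y) σ := by
    rw [← hf.image_arithProg hτ, ← hf.image_arithProg h, arithProg_neg]
  rcases arithProg_eq_iff.1 this with rfl | rfl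
  · have : -s = s :=
      spiral_injective y (image_injective.2 hf.bijective.injective (hτ.trans h.symm))
    rw [hτ, (hf.slope_eq_zero_iff h).2 (by linarith), neg_zero]
  · exact hτ

/-- The image of `spiral y (2 * e)` has its trace on the axis inside that of the image of
`spiral y e`, and the two images cross only on the axis. -/
lemma image_spiral_two_mul {y e σ : ℝ} (h : f '' spiral y e = spiral (heightMap f y) σ) :
    f '' spiral y (2 * e) = spiral (heightMap f y) (2 * σ) := by
  rcases eq_or_ne e 0 with rfl | he
  · obtain rfl := (hf.slope_eq_zero_iff h).2 rfl
    simpa using h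
  have hσ : σ ≠ 0 := mt (hf.slope_eq_zero_iff h).1 he
  obtain ⟨τ, hτ⟩ := hf.exists_image_spiral y (2 * e)
  obtain ⟨t, rfl⟩ : ∃ t : ℤ, τ = σ * t := by
    rw [← arithProg_subset_iff, ← hf.image_arithProg hτ, ← hf.image_arithProg h]
    exact image_mono (arithProg_subset_iff.2 ⟨2, by push_cast; ring⟩)
  have hcross : spiral (heightMap f y) σ ∩ spiral (heightMap f y) (σ * t) ⊆ axis := by
    have := (spiral_inter_spiral_mul_subset_axis_iff (y := y) he 2).2 (Or.inr rfl)
    rw [Int.cast_two, mul_comm] at this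
    rw [← h, ← hτ, ← image_inter hf.bijective.injective, ← hf.image_axis]
    exact image_mono this
  rcases (spiral_inter_spiral_mul_subset_axis_iff hσ t).1 hcross with rfl | rfl
  · exact absurd ((hf.slope_eq_zero_iff hτ).1 (by simp)) (mul_ne_zero two_ne_zero he)
  · rw [hτ, Int.cast_two, mul_comm]

lemma image_spiral_zero_one (h0 : heightMap f 0 = 0) (h1 : heightMap f 1 = 1) :
    f '' spiral 0 1 = spiral 0 1 ∨ f '' spiral 0 1 = spiral 0 (-1) := by
  obtain ⟨σ, hσ⟩ := hf.exists_image_spiral 0 1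
  rw [h0] at hσ
  have hσ0 : σ ≠ 0 := mt (hf.slope_eq_zero_iff hσ).1 one_ne_zero
  have hP := hf.image_arithProg hσ
  -- `heightMap f j = ± σ` forces the image of `j ℤ` to contain, hence to be, the image of `ℤ`
  have key : ∀ j : ℤ, (heightMap f j = σ ∨ heightMap f j = -σ) → j = 1 ∨ j = -1 := by
    intro j hj
    obtain ⟨τ, hτ⟩ := hf.exists_image_spiral 0 j
    rw [h0] at hτ
    have hPj := hf.image_arithProg hτ
    obtain ⟨t, ht⟩ : heightMap f j ∈ arithProg 0 τ :=
      hPj ▸ mem_image_of_mem _ ⟨1, by simp⟩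
    have : arithProg 0 τ = arithProg 0 σ := by
      refine Subset.antisymm ?_ ?_
      · rw [← hPj, ← hP]
        exact image_mono (arithProg_subset_iff.2 ⟨j, by ring⟩)
      · rw [arithProg_eq_iff.2 (by rcases hj with h | h <;> simp [h] :
          σ = heightMap f j ∨ σ = -heightMap f j)]
        exact arithProg_subset_iff.2 ⟨t, by linarith⟩
    rw [← hP, ← hPj] at this
    have := arithProg_eq_iff.1 (image_injective.2 hf.heightMap_injective this)
    exact_mod_cast this
  obtain ⟨_, ⟨j, rfl⟩, hj⟩ : σ ∈ heightMap f '' arithProg 0 1 := hP ▸ ⟨1, by simp⟩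
  obtain ⟨_, ⟨j', rfl⟩, hj'⟩ : -σ ∈ heightMap f '' arithProg 0 1 := hP ▸ ⟨-1, by simp⟩
  simp only [zero_add, one_mul] at hj hj'
  rcases key j (Or.inl hj) with rfl | rfl
  · left; rw [hσ, ← hj, Int.cast_one, h1]
  rcases key j' (Or.inr hj') with rfl | rfl
  · rw [Int.cast_one, h1] at hj'
    right; rw [hσ, (by linarith : σ = -1)]
  · exact absurd (by linarith [hj.symm.trans hj'] : σ = 0) hσ0

lemma image_spiral_two_mul_eq_iff {y e : ℝ} (hy : heightMap f y = y) :
    f '' spiral y (2 * e) = spiral y (2 * e) ↔ f '' spiral y e = spiral y e := by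
  constructor
  · intro h
    obtain ⟨σ, hσ⟩ := hf.exists_image_spiral y e
    have h2σ := hf.image_spiral_two_mul hσ
    rw [hy] at hσ h2σ
    rw [hσ, (by linarith [spiral_injective y (h2σ.symm.trans h)] : σ = e)]
  · intro h
    have := hf.image_spiral_two_mul (y := y) (σ := e) (by rw [hy]; exact h)
    rwa [hy] at this

lemma image_spiral_two_zpow_eq_iff {y : ℝ} (hy : heightMap f y = y) (a : ℤ) :
    f '' spiral y (2 ^ a) = spiral y (2 ^ a) ↔ f '' spiral y 1 = spiral y 1 := by
  induction a using Int.induction_on with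
  | zero => simp
  | succ i ih => rw [zpow_add_one₀ two_ne_zero, mul_comm, hf.image_spiral_two_mul_eq_iff hy, ih]
  | pred i ih =>
    rw [← ih, show (2 : ℝ) ^ (-(i : ℤ)) = 2 * 2 ^ (-(i : ℤ) - 1) by
      rw [← zpow_one_add₀ two_ne_zero]; ring_nf, hf.image_spiral_two_mul_eq_iff hy]

lemma image_spiral_two_zpow_of_isDyadic (h01 : f '' spiral 0 1 = spiral 0 1)
    (h0 : heightMap f 0 = 0) {y : ℝ} (hy : IsDyadic y) (hgy : heightMap f y = y) (b : ℤ) :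
    f '' spiral y (2 ^ b) = spiral y (2 ^ b) := by
  obtain ⟨m, n, rfl⟩ := hy
  have hshift : spiral (n / 2 ^ m) (2 ^ (-(m : ℤ))) = spiral 0 (2 ^ (-(m : ℤ))) :=
    spiral_eq_of_mem_arithProg ⟨n, by rw [zpow_neg, zpow_natCast]; ring⟩
  rw [hf.image_spiral_two_zpow_eq_iff hgy, ← hf.image_spiral_two_zpow_eq_iff hgy (-m), hshift,
    hf.image_spiral_two_zpow_eq_iff h0]
  exact h01

lemma exists_int_mul_heightMap_sub {y₀ y₁ s t z : ℝ} (hst : s ≠ t)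
    (h₀ : f '' spiral y₀ s = spiral y₀ s) (h₁ : f '' spiral y₁ t = spiral y₁ t)
    (hz : (s - t) * z = s * y₁ - t * y₀) :
    ∃ k : ℤ, (s - t) * (heightMap f z - z) = s * t * k := by
  obtain ⟨q, hq, rfl⟩ := exists_mem_spiral_inter_spiral hst hz
  have hfq : f q ∈ spiral y₀ s ∩ spiral y₁ t := by
    rw [← h₀, ← h₁, ← image_inter hf.bijective.injective]
    exact mem_image_of_mem f hq
  obtain ⟨k, hk⟩ := exists_int_of_mem_spiral_inter_spiral hfq
  exact ⟨k, by rw [← hf.snd_apply]; linear_combination hk - hz⟩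

lemma heightMap_eq_of_forall_image_spiral_eq {y₀ y₁ u v z : ℝ} (huv : u ≠ v)
    (h₀ : ∀ b : ℕ, f '' spiral y₀ (2 ^ b * u) = spiral y₀ (2 ^ b * u))
    (h₁ : ∀ b : ℕ, f '' spiral y₁ (2 ^ b * v) = spiral y₁ (2 ^ b * v))
    (hz : (u - v) * z = u * y₁ - v * y₀) : heightMap f z = z := by
  suffices (u - v) * (heightMap f z - z) = 0 by
    linarith [(mul_eq_zero.1 this).resolve_left (sub_ne_zero.2 huv)]
  refine eq_zero_of_forall_exists_eq_two_pow_mul (c := u * v) fun b ↦ ?_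
  have h2b : (2 : ℝ) ^ b ≠ 0 := by positivity
  obtain ⟨k, hk⟩ := hf.exists_int_mul_heightMap_sub (z := z)
    (fun h ↦ huv (mul_left_cancel₀ h2b h)) (h₀ b) (h₁ b) (by linear_combination 2 ^ b * hz)
  exact ⟨k, mul_left_cancel₀ h2b (by linear_combination hk)⟩

section

variable (h01 : f '' spiral 0 1 = spiral 0 1) (h0 : heightMap f 0 = 0)
include h01 h0

lemma heightMap_two_mul_sub {y₀ y₁ : ℝ} (hd₀ : IsDyadic y₀) (hd₁ : IsDyadic y₁)
    (hy₀ : heightMap f y₀ = y₀) (hy₁ : heightMap f y₁ = y₁) :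
    heightMap f (2 * y₁ - y₀) = 2 * y₁ - y₀ := by
  refine hf.heightMap_eq_of_forall_image_spiral_eq (y₀ := y₀) (y₁ := y₁) (u := 2) (v := 1)
    (by norm_num) (fun b ↦ ?_) (fun b ↦ ?_) (by ring)
  · have := hf.image_spiral_two_zpow_of_isDyadic h01 h0 hd₀ hy₀ (b + 1 : ℕ)
    rwa [zpow_natCast, pow_succ] at this
  · have := hf.image_spiral_two_zpow_of_isDyadic h01 h0 hd₁ hy₁ b
    rwa [zpow_natCast, ← mul_one ((2 : ℝ) ^ b)] at this

lemma heightMap_midpoint {y₀ y₁ : ℝ} (hd₀ : IsDyadic y₀) (hd₁ : IsDyadic y₁)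
    (hy₀ : heightMap f y₀ = y₀) (hy₁ : heightMap f y₁ = y₁) :
    heightMap f ((y₀ + y₁) / 2) = (y₀ + y₁) / 2 := by
  refine hf.heightMap_eq_of_forall_image_spiral_eq (y₀ := y₀) (y₁ := y₁) (u := 1) (v := -1)
    (by norm_num) (fun b ↦ ?_) (fun b ↦ ?_) (by ring)
  · have := hf.image_spiral_two_zpow_of_isDyadic h01 h0 hd₀ hy₀ b
    rwa [zpow_natCast, ← mul_one ((2 : ℝ) ^ b)] at this
  · have := hf.image_spiral_two_zpow_of_isDyadic h01 h0 hd₁ hy₁ b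
    rw [zpow_natCast] at this
    have := hf.image_spiral_neg (y := y₁) (σ := 2 ^ b) (by rw [hy₁]; exact this)
    rwa [hy₁, ← mul_neg_one] at this

variable (h1 : heightMap f 1 = 1)
include h1

lemma heightMap_intCast (n : ℤ) : heightMap f n = n := by
  suffices ∀ n : ℤ, heightMap f n = n ∧ heightMap f (n + 1 : ℤ) = (n + 1 : ℤ) from (this n).1
  intro n
  induction n using Int.induction_on with
  | zero => simpa using ⟨h0, h1⟩
  | succ i ih =>
    refine ⟨ih.2, ?_⟩
    have := hf.heightMap_two_mul_sub h01 h0 (isDyadic_intCast _) (isDyadic_intCast _) ih.1 ih.2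
    convert this using 2 <;> push_cast <;> ring
  | pred i ih =>
    refine ⟨?_, by simpa using ih.1⟩
    have := hf.heightMap_two_mul_sub h01 h0 (isDyadic_intCast _) (isDyadic_intCast _) ih.2 ih.1
    convert this using 2 <;> push_cast <;> ring

lemma heightMap_intCast_div_two_pow_of_image_spiral (m : ℕ) (n : ℤ) :
    heightMap f (n / 2 ^ m) = n / 2 ^ m := by
  induction m generalizing n with
  | zero => simpa using hf.heightMap_intCast h01 h0 h1 n
  | succ m ih =>
    obtain ⟨k, rfl | rfl⟩ := Int.even_or_odd' n
    · rw [show ((2 * k : ℤ) : ℝ) / 2 ^ (m + 1) = k / 2 ^ m by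
        push_cast; rw [pow_succ]; field_simp]
      exact ih k
    · rw [show ((2 * k + 1 : ℤ) : ℝ) / 2 ^ (m + 1) =
          (k / 2 ^ m + ((k + 1 : ℤ) : ℝ) / 2 ^ m) / 2 by push_cast; rw [pow_succ]; field_simp; ring]
      exact hf.heightMap_midpoint h01 h0 ⟨m, k, rfl⟩ ⟨m, k + 1, rfl⟩ (ih k) (ih (k + 1))

end

/-- Composing with `reflect` if necessary, `f` may be assumed to fix `spiral 0 1`. -/
lemma heightMap_intCast_div_two_pow (h0 : heightMap f 0 = 0) (h1 : heightMap f 1 = 1)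
    (m : ℕ) (n : ℤ) : heightMap f (n / 2 ^ m) = n / 2 ^ m := by
  rcases hf.image_spiral_zero_one h0 h1 with h01 | h01
  · exact hf.heightMap_intCast_div_two_pow_of_image_spiral h01 h0 h1 m n
  · have hg : heightMap (reflect ∘ f) = heightMap f := rfl
    have h01' : (reflect ∘ f) '' spiral 0 1 = spiral 0 1 := by
      rw [image_comp, h01, image_reflect_spiral, neg_neg]
    rw [← hg] at h0 h1 ⊢
    exact hf.reflect_comp.heightMap_intCast_div_two_pow_of_image_spiral h01' h0 h1 m n

end IsAxialCollineation

lemma cylπ_zero_mk (r : ℝ) : cylπ (0, r) = ((0 : AddCircle (1 : ℝ)), r) := by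
  simp [cylπ]

lemma image_cylπ_zero_prod_univ : cylπ '' (({0} : Set ℝ) ×ˢ (Set.univ : Set ℝ)) = axis := by
  ext q
  constructor
  · rintro ⟨p, ⟨hp, -⟩, rfl⟩
    simp [axis, cylπ, mem_singleton_iff.1 hp]
  · intro hq
    exact ⟨(0, q.2), ⟨rfl, trivial⟩, by rw [cylπ_zero_mk]; exact Prod.ext hq.symm rfl⟩

end FlatCylinder

open FlatCylinder

theorem cylinder_dyadic_fixed (f : Cyl → Cyl)
    (hbij : Function.Bijective f)
    (hgeo : ∀ G : Set Cyl, IsCylGeodesic G → IsCylGeodesic (f '' G))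
    (h0 : f (cylπ (0, 0)) = cylπ (0, 0))
    (h1 : f (cylπ (0, 1)) = cylπ (0, 1))
    (hv : f '' (cylπ '' (({0} : Set ℝ) ×ˢ (Set.univ : Set ℝ))) =
      cylπ '' (({0} : Set ℝ) ×ˢ (Set.univ : Set ℝ))) :
    ∀ (n : ℤ) (m : ℕ), f (cylπ (0, (n : ℝ) / 2 ^ m)) = cylπ (0, (n : ℝ) / 2 ^ m) := by
  rw [image_cylπ_zero_prod_univ] at hv
  have hf : IsAxialCollineation f := ⟨hbij, hgeo, hv⟩
  simp only [cylπ_zero_mk, hf.apply_mk_zero, Prod.mk.injEq, true_and] at h0 h1 ⊢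
  exact fun n m ↦ hf.heightMap_intCast_div_two_pow h0 h1 m n
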